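/- arXiv:2202.04154 — 2 statements merged into one kernel-verified Lean document; each statement's English description precedes it below -/
import Mathlib

section
/- In the toy heterogeneous-mean panel model, the plug-in variance estimator that omits coefficient heterogeneity, V̂_under = (1/(N²T²))Σ_{i=1}^N Σ_{t=1}^T (y_{i,t} − β̂_i)² with y_{i,t} = β_i + e_{i,t}, satisfies E[V̂_under] = (T−1)σ²/(N·T²) and Var(θ̂) − E[V̂_under] = v/N + σ²/(N·T²); in particular it under-estimates the true variance by at least v/N whenever v > 0. -/
open MeasureTheory ProbabilityTheory Finset

/-!
The residuals `y_{it} - β̂_i = e_{it} - ē_i` do not involve `β_i`, so `V̂_under` cannot see the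
heterogeneity `v`. By the sample-variance identity `∑ (x_t - x̄)² = ∑ x_t² - (∑ x_t)² / T`
and independence, each unit contributes `Tσ² - σ² = (T - 1)σ²` in expectation. On the other hand
`θ̂` is a weighted sum of the independent family `(β_i, e_{it})`, with weight `1/N` on each `β_i`
and `1/(NT)` on each `e_{it}`, so `Var θ̂ = v/N + σ²/(NT)`.
-/

theorem Finset.sum_sub_mean_sq {ι K : Type*} [Field K] (s : Finset ι) (x : ι → K) :
    ∑ i ∈ s, (x i - (#s : K)⁻¹ * ∑ j ∈ s, x j) ^ 2
      = ∑ i ∈ s, x i ^ 2 - (#s : K)⁻¹ * (∑ i ∈ s, x i) ^ 2 := by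
  simp only [sub_sq, sum_add_distrib, sum_sub_distrib, ← sum_mul, ← mul_sum, sum_const,
    nsmul_eq_mul]
  by_cases hs : (#s : K) = 0
  · simp [hs]
  · field_simp
    ring

section

variable {Ω ι : Type*} [MeasurableSpace Ω] {μ : Measure Ω} {X : ι → Ω → ℝ} {s : Finset ι}

lemma IndepFun.variance_sum_const_mul (c : ι → ℝ) (hL2 : ∀ i ∈ s, MemLp (X i) 2 μ)
    (hindep : Set.Pairwise s fun i j => X i ⟂ᵢ[μ] X j) :
    variance (fun ω => ∑ i ∈ s, c i * X i ω) μ = ∑ i ∈ s, c i ^ 2 * variance (X i) μ := by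
  have h := IndepFun.variance_sum (X := fun i ω => c i * X i ω)
    (fun i hi => (hL2 i hi).const_mul _)
    fun i hi j hj hij => (hindep hi hj hij).comp (measurable_const_mul _) (measurable_const_mul _)
  simpa [variance_const_mul, ← Finset.sum_fn] using h

lemma variance_mean_add_mean_of_iIndepFun {κ : Type*} {v σ2 : ℝ} {β : κ → Ω → ℝ}
    {e : κ → ι → Ω → ℝ} (S : Finset κ) (s : Finset ι) (hβL2 : ∀ k ∈ S, MemLp (β k) 2 μ)
    (heL2 : ∀ k ∈ S, ∀ i ∈ s, MemLp (e k i) 2 μ) (hβvar : ∀ k ∈ S, variance (β k) μ = v)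
    (hevar : ∀ k ∈ S, ∀ i ∈ s, variance (e k i) μ = σ2)
    (hindep : iIndepFun (Sum.elim β fun p : κ × ι => e p.1 p.2) μ) :
    variance (fun ω => (#S : ℝ)⁻¹ * ∑ k ∈ S, (β k ω + (#s : ℝ)⁻¹ * ∑ i ∈ s, e k i ω)) μ
      = v / #S + σ2 / (#S * #s) := by
  set Z := Sum.elim β fun p : κ × ι => e p.1 p.2
  have hdecomp : (fun ω => (#S : ℝ)⁻¹ * ∑ k ∈ S, (β k ω + (#s : ℝ)⁻¹ * ∑ i ∈ s, e k i ω))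
      = fun ω => ∑ j ∈ S.disjSum (S ×ˢ s),
        Sum.elim (fun _ => (#S : ℝ)⁻¹) (fun _ => ((#S : ℝ) * #s)⁻¹) j * Z j ω := by
    ext ω
    simp [Z, sum_product, mul_sum, sum_add_distrib, mul_add, mul_assoc, mul_left_comm]
  rw [hdecomp, IndepFun.variance_sum_const_mul _ ?_ fun j _ k _ hjk => hindep.indepFun hjk,
    sum_disjSum]
  · simp (disch := simp_all) only [Z, Sum.elim_inl, Sum.elim_inr, hβvar, hevar, sum_const,
      card_product, nsmul_eq_mul, Nat.cast_mul]
    -- `x * (x⁻¹) ^ 2 = x⁻¹` also holds at `x = 0`, where `field_simp` cannot be used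
    rcases eq_or_ne (#S : ℝ) 0 with hS | hS <;> rcases eq_or_ne (#s : ℝ) 0 with hs | hs <;>
      simp [hS, hs] <;> field_simp
  · rintro (k | ⟨k, i⟩) hj
    · exact hβL2 k (inl_mem_disjSum.1 hj)
    · obtain ⟨hk, hi⟩ := mem_product.1 (inr_mem_disjSum.1 hj)
      exact heL2 k hk i hi

lemma integral_sum_sub_mean_sq_of_indepFun [IsFiniteMeasure μ] {σ2 : ℝ}
    (hL2 : ∀ i ∈ s, MemLp (X i) 2 μ) (hindep : Set.Pairwise s fun i j => X i ⟂ᵢ[μ] X j)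
    (hmean : ∀ i ∈ s, μ[X i] = 0) (hvar : ∀ i ∈ s, variance (X i) μ = σ2) (hs : s.Nonempty) :
    ∫ ω, ∑ i ∈ s, (X i ω - (#s : ℝ)⁻¹ * ∑ j ∈ s, X j ω) ^ 2 ∂μ = (#s - 1) * σ2 := by
  have hsum : MemLp (fun ω => ∑ i ∈ s, X i ω) 2 μ := memLp_finsetSum s hL2
  have hsq : ∀ i ∈ s, ∫ ω, X i ω ^ 2 ∂μ = σ2 := fun i hi => by
    rw [← variance_of_integral_eq_zero (hL2 i hi).aemeasurable (hmean i hi), hvar i hi]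
  have hsum_sq : ∫ ω, (∑ i ∈ s, X i ω) ^ 2 ∂μ = #s * σ2 := by
    have hsum_mean : μ[fun ω => ∑ i ∈ s, X i ω] = 0 := by
      rw [integral_finsetSum s fun i hi => (hL2 i hi).integrable one_le_two]
      exact sum_eq_zero hmean
    rw [← variance_of_integral_eq_zero hsum.aemeasurable hsum_mean, ← Finset.sum_fn,
      IndepFun.variance_sum hL2 hindep, sum_congr rfl hvar, sum_const, nsmul_eq_mul]
  simp_rw [Finset.sum_sub_mean_sq]
  rw [integral_sub (integrable_finsetSum s fun i hi => (hL2 i hi).integrable_sq)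
    (hsum.integrable_sq.const_mul _), integral_finsetSum s fun i hi => (hL2 i hi).integrable_sq,
    integral_const_mul, sum_congr rfl hsq, hsum_sq, sum_const, nsmul_eq_mul]
  have : (#s : ℝ) ≠ 0 := by simpa using hs.ne_empty
  field_simp

lemma integral_sum_sum_sub_mean_sq_of_indepFun [IsFiniteMeasure μ] {κ : Type*} {σ2 : ℝ}
    {e : κ → ι → Ω → ℝ} (S : Finset κ) (hL2 : ∀ k ∈ S, ∀ i ∈ s, MemLp (e k i) 2 μ)
    (hindep : ∀ k ∈ S, Set.Pairwise s fun i j => e k i ⟂ᵢ[μ] e k j)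
    (hmean : ∀ k ∈ S, ∀ i ∈ s, μ[e k i] = 0) (hvar : ∀ k ∈ S, ∀ i ∈ s, variance (e k i) μ = σ2)
    (hs : s.Nonempty) :
    ∫ ω, ∑ k ∈ S, ∑ i ∈ s, (e k i ω - (#s : ℝ)⁻¹ * ∑ j ∈ s, e k j ω) ^ 2 ∂μ
      = #S * ((#s - 1) * σ2) := by
  have hint : ∀ k ∈ S, Integrable (fun ω => ∑ i ∈ s,
      (e k i ω - (#s : ℝ)⁻¹ * ∑ j ∈ s, e k j ω) ^ 2) μ := fun k hk =>
    integrable_finsetSum _ fun i hi => ((hL2 k hk i hi).sub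
      ((memLp_finsetSum _ (hL2 k hk)).const_mul _)).integrable_sq
  rw [integral_finsetSum S hint, sum_congr rfl fun k hk => integral_sum_sub_mean_sq_of_indepFun
    (hL2 k hk) (hindep k hk) (hmean k hk) (hvar k hk) hs, sum_const, nsmul_eq_mul]

end

theorem toy_model_plug_in_underestimates_variance_general
    {Ω : Type*} [MeasurableSpace Ω] (μ : Measure Ω) [IsProbabilityMeasure μ]
    (v σ2 : ℝ)
    (β : ℕ → Ω → ℝ) (e : ℕ → ℕ → Ω → ℝ)
    (hβL2 : ∀ i, MemLp (β i) 2 μ) (heL2 : ∀ i t, MemLp (e i t) 2 μ)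
    (hβvar : ∀ i, variance (β i) μ = v)
    (hemean : ∀ i t, ∫ ω, e i t ω ∂μ = 0)
    (hevar : ∀ i t, variance (e i t) μ = σ2)
    (hindep : iIndepFun
      (Sum.elim β (fun p : ℕ × ℕ => e p.1 p.2)) μ)
    (N T : ℕ) (hN : 1 ≤ N) (hT : 1 ≤ T)
    (y : ℕ → ℕ → Ω → ℝ) (hy : ∀ i t ω, y i t ω = β i ω + e i t ω)
    (βhat : ℕ → Ω → ℝ)
    (hβhat : ∀ i ω, βhat i ω = β i ω + (1 / T : ℝ) * ∑ t ∈ Finset.range T, e i t ω)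
    (θhat : Ω → ℝ)
    (hθhat : ∀ ω, θhat ω = (1 / N : ℝ) * ∑ i ∈ Finset.range N, βhat i ω)
    (Vunder : Ω → ℝ)
    (hVunder : ∀ ω, Vunder ω
      = (1 / ((N : ℝ) ^ 2 * (T : ℝ) ^ 2)) * ∑ i ∈ Finset.range N,
          ∑ t ∈ Finset.range T, (y i t ω - βhat i ω) ^ 2) :
    (∫ ω, Vunder ω ∂μ = ((T : ℝ) - 1) * σ2 / (N * (T : ℝ) ^ 2))
    ∧ (variance θhat μ - ∫ ω, Vunder ω ∂μ = v / N + σ2 / (N * (T : ℝ) ^ 2))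
    ∧ (0 < v → (∫ ω, Vunder ω ∂μ) + v / N ≤ variance θhat μ) := by
  have hθ : θhat = fun ω => (#(range N) : ℝ)⁻¹ * ∑ i ∈ range N,
      (β i ω + (#(range T) : ℝ)⁻¹ * ∑ t ∈ range T, e i t ω) := by
    ext ω
    simp [hθhat, hβhat]
  have hvarθ : variance θhat μ = v / N + σ2 / (N * T) := by
    rw [hθ, variance_mean_add_mean_of_iIndepFun _ _ (fun i _ => hβL2 i) (fun i _ t _ => heL2 i t)
      (fun i _ => hβvar i) (fun i _ t _ => hevar i t) hindep]
    simp only [card_range]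
  have hV : Vunder = fun ω => (1 / ((N : ℝ) ^ 2 * (T : ℝ) ^ 2)) * ∑ i ∈ range N,
      ∑ t ∈ range T, (e i t ω - (#(range T) : ℝ)⁻¹ * ∑ s ∈ range T, e i s ω) ^ 2 := by
    ext ω
    simp [hVunder, hy, hβhat]
  have hEV : ∫ ω, Vunder ω ∂μ = ((T : ℝ) - 1) * σ2 / (N * (T : ℝ) ^ 2) := by
    rw [hV, integral_const_mul, integral_sum_sum_sub_mean_sq_of_indepFun _
      (fun i _ t _ => heL2 i t)
      (fun i _ t _ s _ hts => hindep.indepFun (i := .inr (i, t)) (j := .inr (i, s))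
        (by simpa using hts))
      (fun i _ t _ => hemean i t) (fun i _ t _ => hevar i t) (nonempty_range_iff.2 (by omega))]
    simp only [card_range]
    field_simp
  have hgap : variance θhat μ - ∫ ω, Vunder ω ∂μ = v / N + σ2 / (N * (T : ℝ) ^ 2) := by
    rw [hvarθ, hEV]
    field_simp
    ring
  refine ⟨hEV, hgap, fun _ => ?_⟩
  have hσ2 : 0 ≤ σ2 := hevar 0 0 ▸ variance_nonneg _ _
  have : 0 ≤ σ2 / (N * (T : ℝ) ^ 2) := by positivity
  linarith

/-- In the toy heterogeneous-mean panel model, the plug-in variance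
estimator that omits coefficient heterogeneity,
`V̂_under = (1/(N²T²))ΣΣ (y_{it} − β̂_i)²` with `y_{it} = β_i + e_{it}`, satisfies
`E[V̂_under] = (T−1)σ²/(N·T²)` and `Var(θ̂) − E[V̂_under] = v/N + σ²/(N·T²)`;
in particular it under-estimates the true variance by at least `v/N` when `v > 0`. -/
theorem toy_model_plug_in_underestimates_variance
    {Ω : Type*} [MeasurableSpace Ω] (μ : Measure Ω) [IsProbabilityMeasure μ]
    (θ v σ2 : ℝ) (hv : 0 ≤ v)
    (β : ℕ → Ω → ℝ) (e : ℕ → ℕ → Ω → ℝ)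
    (hβmeas : ∀ i, Measurable (β i)) (hemeas : ∀ i t, Measurable (e i t))
    (hβL2 : ∀ i, MemLp (β i) 2 μ) (heL2 : ∀ i t, MemLp (e i t) 2 μ)
    (hβid : ∀ i, IdentDistrib (β i) (β 0) μ μ)
    (heid : ∀ i t, IdentDistrib (e i t) (e 0 0) μ μ)
    (hβmean : ∀ i, ∫ ω, β i ω ∂μ = θ)
    (hβvar : ∀ i, variance (β i) μ = v)
    (hemean : ∀ i t, ∫ ω, e i t ω ∂μ = 0)
    (hevar : ∀ i t, variance (e i t) μ = σ2)
    (hindep : iIndepFun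
      (Sum.elim β (fun p : ℕ × ℕ => e p.1 p.2)) μ)
    (N T : ℕ) (hN : 1 ≤ N) (hT : 1 ≤ T)
    (y : ℕ → ℕ → Ω → ℝ) (hy : ∀ i t ω, y i t ω = β i ω + e i t ω)
    (βhat : ℕ → Ω → ℝ)
    (hβhat : ∀ i ω, βhat i ω = β i ω + (1 / T : ℝ) * ∑ t ∈ Finset.range T, e i t ω)
    (θhat : Ω → ℝ)
    (hθhat : ∀ ω, θhat ω = (1 / N : ℝ) * ∑ i ∈ Finset.range N, βhat i ω)
    (Vunder : Ω → ℝ)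
    (hVunder : ∀ ω, Vunder ω
      = (1 / ((N : ℝ) ^ 2 * (T : ℝ) ^ 2)) * ∑ i ∈ Finset.range N,
          ∑ t ∈ Finset.range T, (y i t ω - βhat i ω) ^ 2) :
    (∫ ω, Vunder ω ∂μ = ((T : ℝ) - 1) * σ2 / (N * (T : ℝ) ^ 2))
    ∧ (variance θhat μ - ∫ ω, Vunder ω ∂μ = v / N + σ2 / (N * (T : ℝ) ^ 2))
    ∧ (0 < v → (∫ ω, Vunder ω ∂μ) + v / N ≤ variance θhat μ) :=
  toy_model_plug_in_underestimates_variance_general μ v σ2 β e hβL2 heL2 hβvar hemean hevar hindep N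
    T hN hT y hy βhat hβhat θhat hθhat Vunder hVunder
end

section
/- Uniform ratio consistency of the adaptive (cross-sectional bootstrap) variance estimator: suppose for each N ≥ 1, (β^{(N)}_i)_{1≤i≤N} are i.i.d. real random variables with mean θ, variance v_N ∈ [0, C], and fourth central moment E(β^{(N)}_i − θ)⁴ ≤ K·v_N² for fixed constants C ≥ 0 and K ≥ 1; (e_{i,t})_{i,t≥1} are i.i.d. with mean 0, variance σ² > 0 and E[e_{1,1}⁴] < ∞; the family {β^{(N)}_i} ∪ {e_{i,t}} is mutually independent for each N; and T_N ≥ 1 is arbitrary. Let β̂_i = β^{(N)}_i + (1/T_N)Σ_{t=1}^{T_N} e_{i,t}, θ̂_N = (1/N)Σ_{i=1}^N β̂_i, V̂_N = (1/N²)Σ_{i=1}^N (β̂_i − θ̂_N)², and Var_N = v_N/N + σ²/(N·T_N). Then V̂_N/Var_N converges to 1 in probability as N → ∞, i.e. for every ε > 0, P(|V̂_N/Var_N − 1| > ε) → 0, uniformly adapting to any degree of heterogeneity v_N ∈ [0, C]. -/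
/-!
Write `X_i = β̂_i - θ = (β_i - θ) + ē_i`, where `ē_i` is the time average of the errors of unit
`i`. The two summands are independent and centred, so `X_i` has variance
`s_N = v_N + σ²/T_N` and, expanding the fourth power, `E X_i⁴ ≤ L s_N²` with
`L = K + 6 + (E e⁴ + 3σ⁴)/σ⁴` independent of `N`; here `E (∑_{t<T} e_t)⁴ = T E e⁴ + 3T(T-1)σ⁴`.
Since `V̂_N / Var_N - 1 = (∑ X_i² - N s_N)/(N s_N) - (∑ X_i)²/(N² s_N)` and the `X_i` are
independent, Chebyshev's inequality for `∑ X_i²` and for `∑ X_i` bounds the probability of a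
deviation larger than `ε` by `(4L/ε² + 2/ε)/N`.
-/

open MeasureTheory ProbabilityTheory Filter Finset

section Moments

variable {Ω : Type*} [MeasurableSpace Ω] {μ : Measure Ω}

lemma memLp_four_of_integrable_pow_four {f : Ω → ℝ} (hf : AEStronglyMeasurable f μ)
    (h : Integrable (fun ω => f ω ^ 4) μ) : MemLp f 4 μ := by
  refine (integrable_norm_rpow_iff hf (by norm_num) (by norm_num)).mp ?_
  convert h using 2 with ω
  rw [ENNReal.toReal_ofNat, Real.norm_eq_abs, show (4 : ℝ) = (4 : ℕ) by norm_num,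
    Real.rpow_natCast, Even.pow_abs ⟨2, rfl⟩]

lemma MeasureTheory.MemLp.integrable_pow_of_le [IsFiniteMeasure μ] {f : Ω → ℝ} {n k : ℕ}
    (hf : MemLp f n μ) (hk : k ≤ n) : Integrable (fun ω => f ω ^ k) μ := by
  refine (integrable_norm_iff (hf.aestronglyMeasurable.pow k)).mp ?_
  simpa only [Pi.pow_apply, norm_pow] using
    (hf.mono_exponent (by exact_mod_cast hk)).integrable_norm_pow'

lemma ProbabilityTheory.IndepFun.integral_add_pow [IsFiniteMeasure μ] {X Y : Ω → ℝ}
    (hXY : IndepFun X Y μ) {n : ℕ} (hX : MemLp X n μ) (hY : MemLp Y n μ) :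
    ∫ ω, (X ω + Y ω) ^ n ∂μ =
      ∑ k ∈ range (n + 1), (∫ ω, X ω ^ k ∂μ) * (∫ ω, Y ω ^ (n - k) ∂μ) * n.choose k := by
  have hpow : ∀ k, IndepFun (fun ω => X ω ^ k) (fun ω => Y ω ^ (n - k)) μ := fun k =>
    hXY.comp (measurable_id.pow_const k) (measurable_id.pow_const (n - k))
  simp_rw [add_pow]
  rw [integral_finsetSum]
  · refine sum_congr rfl fun k _ => ?_
    rw [integral_mul_const, ← (hpow k).integral_mul_eq_mul_integral
      (hX.aestronglyMeasurable.pow k) (hY.aestronglyMeasurable.pow (n - k))]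
    rfl
  · intro k hk
    exact ((hpow k).integrable_mul (hX.integrable_pow_of_le (by simp at hk; omega))
      (hY.integrable_pow_of_le (Nat.sub_le n k))).mul_const _

lemma ProbabilityTheory.IndepFun.integral_add_sq_of_integral_eq_zero [IsProbabilityMeasure μ]
    {X Y : Ω → ℝ} (hXY : IndepFun X Y μ)
    (hX : MemLp X 2 μ) (hY : MemLp Y 2 μ) (hX0 : ∫ ω, X ω ∂μ = 0) (hY0 : ∫ ω, Y ω ∂μ = 0) :
    ∫ ω, (X ω + Y ω) ^ 2 ∂μ = ∫ ω, X ω ^ 2 ∂μ + ∫ ω, Y ω ^ 2 ∂μ := by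
  rw [hXY.integral_add_pow (by exact_mod_cast hX) (by exact_mod_cast hY)]
  simp [sum_range_succ, hX0, hY0]
  ring

lemma ProbabilityTheory.IndepFun.integral_add_pow_four_of_integral_eq_zero
    [IsProbabilityMeasure μ] {X Y : Ω → ℝ} (hXY : IndepFun X Y μ)
    (hX : MemLp X 4 μ) (hY : MemLp Y 4 μ) (hX0 : ∫ ω, X ω ∂μ = 0) (hY0 : ∫ ω, Y ω ∂μ = 0) :
    ∫ ω, (X ω + Y ω) ^ 4 ∂μ =
      ∫ ω, X ω ^ 4 ∂μ + 6 * (∫ ω, X ω ^ 2 ∂μ) * (∫ ω, Y ω ^ 2 ∂μ) + ∫ ω, Y ω ^ 4 ∂μ := by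
  rw [hXY.integral_add_pow (by exact_mod_cast hX) (by exact_mod_cast hY)]
  simp [sum_range_succ, hX0, hY0, Nat.choose]
  ring

lemma integral_finsetSum_apply_eq_zero {ι : Type*} {c : ι → Ω → ℝ} (s : Finset ι)
    (hc : ∀ t ∈ s, Integrable (c t) μ) (h0 : ∀ t ∈ s, ∫ ω, c t ω ∂μ = 0) :
    ∫ ω, (∑ t ∈ s, c t) ω ∂μ = 0 := by
  simp_rw [Finset.sum_apply]
  rw [integral_finsetSum _ hc]
  exact sum_eq_zero h0

lemma integral_sum_range_sq [IsProbabilityMeasure μ] {c : ℕ → Ω → ℝ} (hind : iIndepFun c μ)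
    (hmeas : ∀ t, Measurable (c t)) (hc : ∀ t, MemLp (c t) 2 μ)
    (h0 : ∀ t, ∫ ω, c t ω ∂μ = 0) {m₂ : ℝ} (h2 : ∀ t, ∫ ω, c t ω ^ 2 ∂μ = m₂) (n : ℕ) :
    ∫ ω, (∑ t ∈ range n, c t ω) ^ 2 ∂μ = n * m₂ := by
  induction n with
  | zero => simp
  | succ n ih =>
    have hS : MemLp (∑ t ∈ range n, c t) 2 μ := memLp_finsetSum' _ fun t _ => hc t
    have hS0 : ∫ ω, (∑ t ∈ range n, c t) ω ∂μ = 0 :=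
      integral_finsetSum_apply_eq_zero _ (fun t _ => (hc t).integrable one_le_two) fun t _ => h0 t
    have := (hind.indepFun_sum_range_succ hmeas n).integral_add_sq_of_integral_eq_zero
      hS (hc n) hS0 (h0 n)
    simp only [Finset.sum_apply] at this
    simp_rw [sum_range_succ, this, ih, h2]
    push_cast; ring

lemma integral_sum_range_pow_four [IsProbabilityMeasure μ] {c : ℕ → Ω → ℝ}
    (hind : iIndepFun c μ) (hmeas : ∀ t, Measurable (c t)) (hc : ∀ t, MemLp (c t) 4 μ)
    (h0 : ∀ t, ∫ ω, c t ω ∂μ = 0) {m₂ m₄ : ℝ} (h2 : ∀ t, ∫ ω, c t ω ^ 2 ∂μ = m₂)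
    (h4 : ∀ t, ∫ ω, c t ω ^ 4 ∂μ = m₄) (n : ℕ) :
    ∫ ω, (∑ t ∈ range n, c t ω) ^ 4 ∂μ = n * m₄ + 3 * n * (n - 1) * m₂ ^ 2 := by
  induction n with
  | zero => simp
  | succ n ih =>
    have hS : MemLp (∑ t ∈ range n, c t) 4 μ := memLp_finsetSum' _ fun t _ => hc t
    have hS0 : ∫ ω, (∑ t ∈ range n, c t) ω ∂μ = 0 :=
      integral_finsetSum_apply_eq_zero _ (fun t _ => (hc t).integrable (by norm_num))
        fun t _ => h0 t
    have := (hind.indepFun_sum_range_succ hmeas n).integral_add_pow_four_of_integral_eq_zero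
      hS (hc n) hS0 (h0 n)
    simp only [Finset.sum_apply] at this
    have hsq := integral_sum_range_sq hind hmeas (fun t => (hc t).mono_exponent (by norm_num))
      h0 h2 n
    simp_rw [sum_range_succ, this, ih, hsq, h2, h4]
    push_cast; ring

lemma ProbabilityTheory.iIndepFun.indepFun_finsetSum_mul {ι : Type*} {F : ι → Ω → ℝ}
    (h : iIndepFun F μ) (hF : ∀ j, Measurable (F j)) {S₁ S₂ : Finset ι} (hS : Disjoint S₁ S₂)
    (w : ι → ℝ) :
    IndepFun (fun ω => ∑ j ∈ S₁, w j * F j ω) (fun ω => ∑ j ∈ S₂, w j * F j ω) μ := by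
  have hlin : ∀ S : Finset ι, Measurable fun x : S → ℝ => ∑ j : S, w j * x j := fun S =>
    Finset.measurable_sum _ fun j _ => (measurable_pi_apply j).const_mul _
  convert (h.indepFun_finset S₁ S₂ hS hF).comp (hlin S₁) (hlin S₂) using 1 <;>
    ext ω <;> exact (Finset.sum_coe_sort _ fun j => w j * F j ω).symm

end Moments

noncomputable def sumSqDev (x : ℕ → ℝ) (N : ℕ) : ℝ :=
  ∑ i ∈ range N, (x i - (∑ j ∈ range N, x j) / N) ^ 2

lemma sumSqDev_eq (x : ℕ → ℝ) (N : ℕ) (m : ℝ) :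
    sumSqDev x N = ∑ i ∈ range N, (x i - m) ^ 2 - (∑ i ∈ range N, (x i - m)) ^ 2 / N := by
  rcases N.eq_zero_or_pos with rfl | hN
  · simp [sumSqDev]
  have hN' : (N : ℝ) ≠ 0 := by positivity
  have hdev : ∀ i, x i - (∑ j ∈ range N, x j) / N
      = (x i - m) - (∑ j ∈ range N, (x j - m)) / N := by
    intro i
    rw [sum_sub_distrib, sum_const, card_range, nsmul_eq_mul]
    field_simp
    ring
  set y : ℕ → ℝ := fun i => x i - m
  have hexpand : ∀ a : ℝ, ∑ i ∈ range N, (y i - a) ^ 2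
      = ∑ i ∈ range N, y i ^ 2 - 2 * a * ∑ i ∈ range N, y i + N * a ^ 2 := by
    intro a
    simp only [sub_sq, sum_add_distrib, sum_sub_distrib, ← sum_mul, ← mul_sum, sum_const,
      card_range, nsmul_eq_mul]
    ring
  rw [sumSqDev, sum_congr rfl fun i _ => congrArg (· ^ 2) (hdev i), hexpand]
  field_simp
  ring

lemma abs_sub_sq_div_div_sub_one_lt {Q S s ε : ℝ} {N : ℕ} (hN : 0 < N) (hs : 0 < s)
    (hε : 0 < ε) (hQ : |Q - N * s| < ε / 2 * (N * s)) (hS : |S| < Real.sqrt (ε / 2 * s) * N) :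
    |(Q - S ^ 2 / N) / (N * s) - 1| < ε := by
  have hNs : (0 : ℝ) < N * s := by positivity
  have hQ' : |(Q - N * s) / (N * s)| < ε / 2 := by
    rwa [abs_div, abs_of_pos hNs, div_lt_iff₀ hNs]
  have hS' : S ^ 2 / (N ^ 2 * s) < ε / 2 := by
    rw [div_lt_iff₀ (by positivity), ← sq_abs]
    calc |S| ^ 2 < (Real.sqrt (ε / 2 * s) * N) ^ 2 := by gcongr
      _ = ε / 2 * (N ^ 2 * s) := by rw [mul_pow, Real.sq_sqrt (by positivity)]; ring
  have hsplit : (Q - S ^ 2 / N) / (N * s) - 1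
      = (Q - N * s) / (N * s) - S ^ 2 / (N ^ 2 * s) := by
    field_simp
    ring
  rw [hsplit]
  have : 0 ≤ S ^ 2 / (N ^ 2 * s) := by positivity
  calc _ ≤ |(Q - N * s) / (N * s)| + |S ^ 2 / (N ^ 2 * s)| := abs_sub _ _
    _ < ε := by rw [abs_of_nonneg this]; linarith

section SampleVariance

variable {Ω : Type*} [MeasurableSpace Ω] {μ : Measure Ω} [IsProbabilityMeasure μ]

lemma measure_le_abs_sum_range_sub_le {X : ℕ → Ω → ℝ} (hX : ∀ i, MemLp (X i) 2 μ)
    (hind : Pairwise fun i j => IndepFun (X i) (X j) μ) {m V : ℝ}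
    (hmean : ∀ i, ∫ ω, X i ω ∂μ = m) (hvar : ∀ i, variance (X i) μ ≤ V) (N : ℕ) {c : ℝ}
    (hc : 0 < c) :
    μ {ω | c ≤ |∑ i ∈ range N, X i ω - N * m|} ≤ ENNReal.ofReal (N * V / c ^ 2) := by
  have hS : MemLp (∑ i ∈ range N, X i) 2 μ := memLp_finsetSum' _ fun i _ => hX i
  have hmeanS : ∫ ω, ∑ i ∈ range N, X i ω ∂μ = N * m := by
    rw [integral_finsetSum _ fun i _ => (hX i).integrable one_le_two]
    simp [hmean]
  have hvarS : variance (∑ i ∈ range N, X i) μ ≤ N * V := by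
    rw [IndepFun.variance_sum (fun i _ => hX i) fun i _ j _ hij => hind hij]
    simpa using sum_le_sum fun i (_ : i ∈ range N) => hvar i
  have hcheb := meas_ge_le_variance_div_sq hS hc
  simp only [Finset.sum_apply, hmeanS] at hcheb
  exact hcheb.trans (ENNReal.ofReal_le_ofReal (by gcongr))

lemma measure_le_abs_sum_range_sq_sub_le {Y : ℕ → Ω → ℝ} (hY : ∀ i, MemLp (Y i) 4 μ)
    (hind : Pairwise fun i j => IndepFun (Y i) (Y j) μ) {s L : ℝ}
    (h2 : ∀ i, ∫ ω, Y i ω ^ 2 ∂μ = s) (h4 : ∀ i, ∫ ω, Y i ω ^ 4 ∂μ ≤ L * s ^ 2) (N : ℕ) {c : ℝ}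
    (hc : 0 < c) :
    μ {ω | c ≤ |∑ i ∈ range N, Y i ω ^ 2 - N * s|} ≤ ENNReal.ofReal (N * (L * s ^ 2) / c ^ 2) := by
  have hY2 : ∀ i, MemLp (fun ω => Y i ω ^ 2) 2 μ := fun i => by
    refine (memLp_two_iff_integrable_sq ((hY i).aestronglyMeasurable.pow 2)).mpr ?_
    simpa only [Pi.pow_apply, ← pow_mul] using (hY i).integrable_pow_of_le (n := 4) le_rfl
  have hvar : ∀ i, variance (fun ω => Y i ω ^ 2) μ ≤ L * s ^ 2 := fun i => by
    have hfour : μ[(fun ω => Y i ω ^ 2) ^ 2] = ∫ ω, Y i ω ^ 4 ∂μ := by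
      congr 1 with ω
      simp only [Pi.pow_apply, ← pow_mul]
    exact (variance_le_expectation_sq ((hY i).aestronglyMeasurable.pow 2)).trans
      (hfour.trans_le (h4 i))
  exact measure_le_abs_sum_range_sub_le hY2
    (fun i j hij => (hind hij).comp (measurable_id.pow_const 2) (measurable_id.pow_const 2))
    h2 hvar N hc

theorem measure_lt_abs_sumSqDev_div_sub_one_le {X : ℕ → Ω → ℝ} (hX : ∀ i, MemLp (X i) 4 μ)
    (hind : Pairwise fun i j => IndepFun (X i) (X j) μ) {m s L : ℝ}
    (hmean : ∀ i, ∫ ω, X i ω ∂μ = m) (hs : 0 < s)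
    (h2 : ∀ i, ∫ ω, (X i ω - m) ^ 2 ∂μ = s) (h4 : ∀ i, ∫ ω, (X i ω - m) ^ 4 ∂μ ≤ L * s ^ 2)
    {N : ℕ} (hN : 0 < N) {ε : ℝ} (hε : 0 < ε) :
    μ {ω | ε < |sumSqDev (fun i => X i ω) N / (N * s) - 1|}
      ≤ ENNReal.ofReal ((4 * L / ε ^ 2 + 2 / ε) / N) := by
  set Y : ℕ → Ω → ℝ := fun i ω => X i ω - m
  have hY : ∀ i, MemLp (Y i) 4 μ := fun i => (hX i).sub (memLp_const m)
  have hYind : Pairwise fun i j => IndepFun (Y i) (Y j) μ := fun i j hij =>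
    (hind hij).comp (measurable_id.sub_const m) (measurable_id.sub_const m)
  have hY0 : ∀ i, ∫ ω, Y i ω ∂μ = 0 := fun i => by
    rw [integral_sub ((hX i).integrable (by norm_num)) (integrable_const m), hmean]; simp
  have hvarY : ∀ i, variance (Y i) μ ≤ s := fun i => by
    rw [variance_of_integral_eq_zero (hY i).aestronglyMeasurable.aemeasurable (hY0 i), h2]
  have hL : 0 ≤ L := by
    have h40 : 0 ≤ ∫ ω, (X 0 ω - m) ^ 4 ∂μ := integral_nonneg fun ω => by positivity
    exact nonneg_of_mul_nonneg_left (h40.trans (h4 0)) (by positivity)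
  have hsq := measure_le_abs_sum_range_sq_sub_le hY hYind h2 h4 N
    (c := ε / 2 * (N * s)) (by positivity)
  have hlin := measure_le_abs_sum_range_sub_le (fun i => (hY i).mono_exponent (by norm_num))
    hYind hY0 hvarY N (c := Real.sqrt (ε / 2 * s) * N) (by positivity)
  simp only [mul_zero, sub_zero] at hlin
  have hsub : {ω | ε < |sumSqDev (fun i => X i ω) N / (N * s) - 1|} ⊆
      {ω | ε / 2 * (N * s) ≤ |∑ i ∈ range N, Y i ω ^ 2 - N * s|} ∪
        {ω | Real.sqrt (ε / 2 * s) * N ≤ |∑ i ∈ range N, Y i ω|} := by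
    intro ω hω
    contrapose! hω
    simp only [Set.mem_union, Set.mem_ofPred_eq, not_or, not_le] at hω
    rw [Set.mem_ofPred_eq, not_lt, sumSqDev_eq _ _ m]
    exact (abs_sub_sq_div_div_sub_one_lt hN hs hε hω.1 hω.2).le
  calc μ {ω | ε < |sumSqDev (fun i => X i ω) N / (N * s) - 1|}
      ≤ μ {ω | ε / 2 * (N * s) ≤ |∑ i ∈ range N, Y i ω ^ 2 - N * s|} +
        μ {ω | Real.sqrt (ε / 2 * s) * N ≤ |∑ i ∈ range N, Y i ω|} :=
        (measure_mono hsub).trans (measure_union_le _ _)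
    _ ≤ ENNReal.ofReal (4 * L / ε ^ 2 / N) + ENNReal.ofReal (2 / ε / N) := by
        refine add_le_add (hsq.trans_eq (congrArg _ ?_)) (hlin.trans_eq (congrArg _ ?_))
        · field_simp
          ring
        · rw [mul_pow, Real.sq_sqrt (by positivity)]
          field_simp
    _ = ENNReal.ofReal ((4 * L / ε ^ 2 + 2 / ε) / N) := by
        rw [← ENNReal.ofReal_add (by positivity) (by positivity), add_div]

end SampleVariance

lemma tendsto_zero_of_le_ofReal_div {f : ℕ → ENNReal} (C : ℝ)
    (hf : ∀ N, 0 < N → f N ≤ ENNReal.ofReal (C / N)) : Tendsto f atTop (nhds 0) := by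
  have hC : Tendsto (fun N : ℕ => ENNReal.ofReal (C / N)) atTop (nhds 0) := by
    simpa using ENNReal.tendsto_ofReal (tendsto_const_div_atTop_nhds_zero_nat C)
  exact tendsto_of_tendsto_of_tendsto_of_le_of_le' tendsto_const_nhds hC
    (Eventually.of_forall fun _ => zero_le) ((eventually_gt_atTop 0).mono hf)

section ToyModel

variable {Ω : Type*}

noncomputable def errorMean (e : ℕ → ℕ → Ω → ℝ) (T i : ℕ) (ω : Ω) : ℝ :=
  (1 / T : ℝ) * ∑ t ∈ range T, e i t ω

noncomputable def coefEstimate (β : ℕ → Ω → ℝ) (e : ℕ → ℕ → Ω → ℝ) (T i : ℕ) (ω : Ω) : ℝ :=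
  β i ω + errorMean e T i ω

lemma coefEstimate_sub (β : ℕ → Ω → ℝ) (e : ℕ → ℕ → Ω → ℝ) (θ : ℝ) (T i : ℕ) (ω : Ω) :
    coefEstimate β e T i ω - θ = (β i ω - θ) + errorMean e T i ω := by
  rw [coefEstimate]
  ring

variable [MeasurableSpace Ω] {μ : Measure Ω}

structure ToyPanelRow (μ : Measure Ω) (θ v σ2 K : ℝ) (β : ℕ → Ω → ℝ)
    (e : ℕ → ℕ → Ω → ℝ) : Prop where
  measurable_coef : ∀ i, Measurable (β i)
  measurable_error : ∀ i t, Measurable (e i t)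
  identDistrib_error : ∀ i t, IdentDistrib (e i t) (e 0 0) μ μ
  integrable_coef_sub_pow_four : ∀ i, Integrable (fun ω => (β i ω - θ) ^ 4) μ
  integral_coef : ∀ i, ∫ ω, β i ω ∂μ = θ
  variance_coef : ∀ i, variance (β i) μ = v
  integral_coef_sub_pow_four_le : ∀ i, ∫ ω, (β i ω - θ) ^ 4 ∂μ ≤ K * v ^ 2
  integral_error : ∀ i t, ∫ ω, e i t ω ∂μ = 0
  variance_error : ∀ i t, variance (e i t) μ = σ2
  integrable_error_pow_four : ∀ i t, Integrable (fun ω => e i t ω ^ 4) μ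
  iIndepFun_coef_error : iIndepFun (Sum.elim β fun p : ℕ × ℕ => e p.1 p.2) μ

namespace ToyPanelRow

variable {θ v σ2 K : ℝ} {β : ℕ → Ω → ℝ} {e : ℕ → ℕ → Ω → ℝ}

lemma measurable (h : ToyPanelRow μ θ v σ2 K β e) :
    ∀ j, Measurable ((Sum.elim β fun p : ℕ × ℕ => e p.1 p.2) j)
  | .inl i => h.measurable_coef i
  | .inr p => h.measurable_error p.1 p.2

lemma variance_nonneg (h : ToyPanelRow μ θ v σ2 K β e) : 0 ≤ v :=
  h.variance_coef 0 ▸ ProbabilityTheory.variance_nonneg _ _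

lemma memLp_coef_sub (h : ToyPanelRow μ θ v σ2 K β e) (i : ℕ) :
    MemLp (fun ω => β i ω - θ) 4 μ :=
  memLp_four_of_integrable_pow_four ((h.measurable_coef i).sub_const θ).aestronglyMeasurable
    (h.integrable_coef_sub_pow_four i)

lemma memLp_coef [IsFiniteMeasure μ] (h : ToyPanelRow μ θ v σ2 K β e) (i : ℕ) :
    MemLp (β i) 4 μ := by
  convert (h.memLp_coef_sub i).add (memLp_const θ) using 1
  ext ω
  simp

lemma integral_coef_sub [IsProbabilityMeasure μ] (h : ToyPanelRow μ θ v σ2 K β e) (i : ℕ) :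
    ∫ ω, (β i ω - θ) ∂μ = 0 := by
  rw [integral_sub ((h.memLp_coef i).integrable (by norm_num)) (integrable_const θ),
    h.integral_coef]
  simp

lemma integral_coef_sub_sq [IsProbabilityMeasure μ] (h : ToyPanelRow μ θ v σ2 K β e) (i : ℕ) :
    ∫ ω, (β i ω - θ) ^ 2 ∂μ = v := by
  rw [← h.variance_coef i, variance_eq_integral (h.measurable_coef i).aemeasurable,
    h.integral_coef]

lemma memLp_error (h : ToyPanelRow μ θ v σ2 K β e) (i t : ℕ) : MemLp (e i t) 4 μ :=
  memLp_four_of_integrable_pow_four (h.measurable_error i t).aestronglyMeasurable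
    (h.integrable_error_pow_four i t)

lemma integral_error_sq (h : ToyPanelRow μ θ v σ2 K β e) (i t : ℕ) :
    ∫ ω, e i t ω ^ 2 ∂μ = σ2 := by
  rw [← h.variance_error i t,
    variance_of_integral_eq_zero (h.measurable_error i t).aemeasurable (h.integral_error i t)]

lemma integral_error_pow_four (h : ToyPanelRow μ θ v σ2 K β e) (i t : ℕ) :
    ∫ ω, e i t ω ^ 4 ∂μ = ∫ ω, e 0 0 ω ^ 4 ∂μ :=
  ((h.identDistrib_error i t).comp (measurable_id.pow_const 4)).integral_eq

lemma iIndepFun_error (h : ToyPanelRow μ θ v σ2 K β e) (i : ℕ) :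
    ProbabilityTheory.iIndepFun (e i) μ :=
  h.iIndepFun_coef_error.precomp (g := fun t => Sum.inr (i, t))
    (Sum.inr_injective.comp (Prod.mk_right_injective i))

lemma memLp_errorMean (h : ToyPanelRow μ θ v σ2 K β e) (T i : ℕ) :
    MemLp (errorMean e T i) 4 μ :=
  (memLp_finsetSum _ fun t _ => h.memLp_error i t).const_mul _

lemma integral_errorMean [IsFiniteMeasure μ] (h : ToyPanelRow μ θ v σ2 K β e) (T i : ℕ) :
    ∫ ω, errorMean e T i ω ∂μ = 0 := by
  simp only [errorMean]
  rw [integral_const_mul,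
    integral_finsetSum _ fun t _ => (h.memLp_error i t).integrable (by norm_num)]
  simp [h.integral_error]

lemma integral_errorMean_sq [IsProbabilityMeasure μ] (h : ToyPanelRow μ θ v σ2 K β e)
    (T i : ℕ) : ∫ ω, errorMean e T i ω ^ 2 ∂μ = σ2 / T := by
  simp only [errorMean, mul_pow]
  rw [integral_const_mul, integral_sum_range_sq (h.iIndepFun_error i) (h.measurable_error i)
    (fun t => (h.memLp_error i t).mono_exponent (by norm_num)) (h.integral_error i)
    (h.integral_error_sq i)]
  rcases T.eq_zero_or_pos with rfl | hT
  · simp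
  · field_simp

lemma integral_errorMean_pow_four_le [IsProbabilityMeasure μ] (h : ToyPanelRow μ θ v σ2 K β e)
    (T i : ℕ) :
    ∫ ω, errorMean e T i ω ^ 4 ∂μ ≤ (∫ ω, e 0 0 ω ^ 4 ∂μ + 3 * σ2 ^ 2) / T ^ 2 := by
  simp only [errorMean, mul_pow]
  rw [integral_const_mul, integral_sum_range_pow_four (h.iIndepFun_error i) (h.measurable_error i)
    (h.memLp_error i) (h.integral_error i) (h.integral_error_sq i) (h.integral_error_pow_four i)]
  rcases T.eq_zero_or_pos with rfl | hT
  · simp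
  have hT1 : (1 : ℝ) ≤ T := by exact_mod_cast hT
  have hm4 : 0 ≤ ∫ ω, e 0 0 ω ^ 4 ∂μ := integral_nonneg fun ω => by positivity
  rw [div_pow, one_pow, one_div_mul_eq_div, div_le_div_iff₀ (by positivity) (by positivity)]
  nlinarith [mul_nonneg hm4 (sub_nonneg.2 hT1), sq_nonneg σ2,
    pow_pos (zero_lt_one.trans_le hT1) 3]

lemma indepFun_coef_sub_errorMean (h : ToyPanelRow μ θ v σ2 K β e) (T i : ℕ) :
    IndepFun (fun ω => β i ω - θ) (errorMean e T i) μ := by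
  have := (h.iIndepFun_coef_error.indepFun_finsetSum_mul h.measurable
    (S₁ := {.inl i}) (S₂ := ({i} ×ˢ range T).map .inr) (by simp)
    (Sum.elim (fun _ => 1) fun _ => (1 / T : ℝ))).comp (measurable_id.sub_const θ) measurable_id
  convert this using 1 <;> ext ω <;> simp [errorMean, mul_sum]

lemma pairwise_indepFun_coefEstimate (h : ToyPanelRow μ θ v σ2 K β e) (T : ℕ) :
    Pairwise fun i j => IndepFun (coefEstimate β e T i) (coefEstimate β e T j) μ := by
  intro i j hij
  have hblock : ∀ k, coefEstimate β e T k = fun ω =>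
      ∑ p ∈ ({k} : Finset ℕ).disjSum ({k} ×ˢ range T),
        Sum.elim (fun _ => 1) (fun _ => (1 / T : ℝ)) p *
          Sum.elim β (fun q : ℕ × ℕ => e q.1 q.2) p ω := by
    intro k
    ext ω
    simp [coefEstimate, errorMean, mul_sum]
  rw [hblock i, hblock j]
  refine h.iIndepFun_coef_error.indepFun_finsetSum_mul h.measurable ?_ _
  simp [Finset.disjoint_left, hij, hij.symm]

lemma memLp_coefEstimate [IsFiniteMeasure μ] (h : ToyPanelRow μ θ v σ2 K β e) (T i : ℕ) :
    MemLp (coefEstimate β e T i) 4 μ :=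
  (h.memLp_coef i).add (h.memLp_errorMean T i)

lemma integral_coefEstimate [IsFiniteMeasure μ] (h : ToyPanelRow μ θ v σ2 K β e) (T i : ℕ) :
    ∫ ω, coefEstimate β e T i ω ∂μ = θ := by
  simp only [coefEstimate]
  rw [integral_add ((h.memLp_coef i).integrable (by norm_num))
    ((h.memLp_errorMean T i).integrable (by norm_num)), h.integral_coef, h.integral_errorMean,
    add_zero]

lemma integral_coefEstimate_sub_sq [IsProbabilityMeasure μ] (h : ToyPanelRow μ θ v σ2 K β e)
    (T i : ℕ) : ∫ ω, (coefEstimate β e T i ω - θ) ^ 2 ∂μ = v + σ2 / T := by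
  simp_rw [coefEstimate_sub]
  rw [(h.indepFun_coef_sub_errorMean T i).integral_add_sq_of_integral_eq_zero
    ((h.memLp_coef_sub i).mono_exponent (by norm_num))
    ((h.memLp_errorMean T i).mono_exponent (by norm_num)) (h.integral_coef_sub i)
    (h.integral_errorMean T i), h.integral_coef_sub_sq, h.integral_errorMean_sq]

lemma integral_coefEstimate_sub_pow_four_le [IsProbabilityMeasure μ]
    (h : ToyPanelRow μ θ v σ2 K β e) (hK : 0 ≤ K) (hσ2 : 0 < σ2) (T i : ℕ) :
    ∫ ω, (coefEstimate β e T i ω - θ) ^ 4 ∂μ ≤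
      (K + 6 + (∫ ω, e 0 0 ω ^ 4 ∂μ + 3 * σ2 ^ 2) / σ2 ^ 2) * (v + σ2 / T) ^ 2 := by
  simp_rw [coefEstimate_sub]
  rw [(h.indepFun_coef_sub_errorMean T i).integral_add_pow_four_of_integral_eq_zero
    (h.memLp_coef_sub i) (h.memLp_errorMean T i) (h.integral_coef_sub i)
    (h.integral_errorMean T i), h.integral_coef_sub_sq, h.integral_errorMean_sq]
  set q := σ2 / T
  set c := (∫ ω, e 0 0 ω ^ 4 ∂μ + 3 * σ2 ^ 2) / σ2 ^ 2
  have hc : 0 ≤ c := by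
    have : 0 ≤ ∫ ω, e 0 0 ω ^ 4 ∂μ := integral_nonneg fun ω => by positivity
    positivity
  have hq : 0 ≤ q := by positivity
  have hv := h.variance_nonneg
  have herror : ∫ ω, errorMean e T i ω ^ 4 ∂μ ≤ c * q ^ 2 := by
    refine (h.integral_errorMean_pow_four_le T i).trans_eq ?_
    simp only [c, q]
    field_simp
  nlinarith [h.integral_coef_sub_pow_four_le i, mul_nonneg hv hq,
    mul_nonneg hK (mul_nonneg hv hq), mul_nonneg hc (mul_nonneg hv hq),
    mul_nonneg hK (sq_nonneg q), mul_nonneg hc (sq_nonneg v)]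

end ToyPanelRow

end ToyModel

theorem toy_model_adaptive_variance_ratio_consistency_general
    {Ω : Type*} [MeasurableSpace Ω] (μ : Measure Ω) [IsProbabilityMeasure μ]
    (θ σ2 K : ℝ) (hσ2 : 0 < σ2) (hK : 1 ≤ K)
    (v : ℕ → ℝ)
    (β : ℕ → ℕ → Ω → ℝ) (e : ℕ → ℕ → Ω → ℝ)
    (hβmeas : ∀ N i, Measurable (β N i)) (hemeas : ∀ i t, Measurable (e i t))
    (heid : ∀ i t, IdentDistrib (e i t) (e 0 0) μ μ)
    (hβint4 : ∀ N i, Integrable (fun ω => (β N i ω - θ) ^ 4) μ)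
    (hβmean : ∀ N i, ∫ ω, β N i ω ∂μ = θ)
    (hβvar : ∀ N i, variance (β N i) μ = v N)
    (hβ4 : ∀ N i, ∫ ω, (β N i ω - θ) ^ 4 ∂μ ≤ K * (v N) ^ 2)
    (hemean : ∀ i t, ∫ ω, e i t ω ∂μ = 0)
    (hevar : ∀ i t, variance (e i t) μ = σ2)
    (he4 : ∀ i t, Integrable (fun ω => (e i t ω) ^ 4) μ)
    (hindep : ∀ N, iIndepFun (m := fun _ : ℕ ⊕ ℕ × ℕ => (inferInstance : MeasurableSpace ℝ))
      (Sum.elim (β N) (fun p : ℕ × ℕ => e p.1 p.2)) μ)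
    (T : ℕ → ℕ) (hT1 : ∀ N, 1 ≤ T N)
    (βhat : ℕ → ℕ → Ω → ℝ)
    (hβhat : ∀ N i ω, βhat N i ω
      = β N i ω + (1 / (T N) : ℝ) * ∑ t ∈ Finset.range (T N), e i t ω)
    (θhat : ℕ → Ω → ℝ)
    (hθhat : ∀ N ω, θhat N ω = (1 / N : ℝ) * ∑ i ∈ Finset.range N, βhat N i ω)
    (Vhat : ℕ → Ω → ℝ)
    (hVhat : ∀ N ω, Vhat N ω
      = (1 / (N : ℝ) ^ 2) * ∑ i ∈ Finset.range N, (βhat N i ω - θhat N ω) ^ 2)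
    (VarN : ℕ → ℝ)
    (hVarN : ∀ N, VarN N = v N / N + σ2 / ((N : ℝ) * (T N : ℝ))) :
    ∀ ε > (0 : ℝ),
      Tendsto (fun N : ℕ => μ {ω | ε < |Vhat N ω / VarN N - 1|}) atTop (nhds 0) := by
  intro ε hε
  have hrow : ∀ N, ToyPanelRow μ θ (v N) σ2 K (β N) e := fun N =>
    ⟨hβmeas N, hemeas, heid, hβint4 N, hβmean N, hβvar N, hβ4 N, hemean, hevar, he4, hindep N⟩
  set L := K + 6 + (∫ ω, e 0 0 ω ^ 4 ∂μ + 3 * σ2 ^ 2) / σ2 ^ 2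
  refine tendsto_zero_of_le_ofReal_div (4 * L / ε ^ 2 + 2 / ε) fun N hN => ?_
  have hs : 0 < v N + σ2 / T N :=
    add_pos_of_nonneg_of_pos (hrow N).variance_nonneg (div_pos hσ2 (by exact_mod_cast hT1 N))
  have hβhat' : βhat N = coefEstimate (β N) e (T N) := by
    ext i ω
    exact hβhat N i ω
  have hratio : ∀ ω, Vhat N ω / VarN N =
      sumSqDev (fun i => βhat N i ω) N / (N * (v N + σ2 / T N)) := by
    intro ω
    have hss : ∑ i ∈ range N, (βhat N i ω - θhat N ω) ^ 2
        = sumSqDev (fun i => βhat N i ω) N := by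
      simp only [sumSqDev, hθhat, one_div_mul_eq_div]
    have hT : (T N : ℝ) ≠ 0 := by have := hT1 N; positivity
    rw [hVhat, hVarN, hss]
    field_simp
  simp_rw [hratio, hβhat']
  exact measure_lt_abs_sumSqDev_div_sub_one_le ((hrow N).memLp_coefEstimate _)
    ((hrow N).pairwise_indepFun_coefEstimate _) ((hrow N).integral_coefEstimate _) hs
    ((hrow N).integral_coefEstimate_sub_sq _)
    ((hrow N).integral_coefEstimate_sub_pow_four_le (by linarith) hσ2 _) hN hε

/-- Uniform ratio consistency of the adaptive (cross-sectional
bootstrap) variance estimator: in the triangular-array toy panel model with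
`v_N ∈ [0, C]`, `E(β^{(N)}_i − θ)⁴ ≤ K·v_N²`, `σ² > 0`, `E[e⁴] < ∞` and arbitrary
`T_N ≥ 1`, the ratio `V̂_N / Var_N` converges to `1` in probability, where
`Var_N = v_N/N + σ²/(N·T_N)`. -/
theorem toy_model_adaptive_variance_ratio_consistency
    {Ω : Type*} [MeasurableSpace Ω] (μ : Measure Ω) [IsProbabilityMeasure μ]
    (θ σ2 C K : ℝ) (hσ2 : 0 < σ2) (hC : 0 ≤ C) (hK : 1 ≤ K)
    (v : ℕ → ℝ) (hv : ∀ N, v N ∈ Set.Icc 0 C)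
    (β : ℕ → ℕ → Ω → ℝ) (e : ℕ → ℕ → Ω → ℝ)
    (hβmeas : ∀ N i, Measurable (β N i)) (hemeas : ∀ i t, Measurable (e i t))
    (hβid : ∀ N i, IdentDistrib (β N i) (β N 0) μ μ)
    (heid : ∀ i t, IdentDistrib (e i t) (e 0 0) μ μ)
    (hβint4 : ∀ N i, Integrable (fun ω => (β N i ω - θ) ^ 4) μ)
    (hβmean : ∀ N i, ∫ ω, β N i ω ∂μ = θ)
    (hβvar : ∀ N i, variance (β N i) μ = v N)
    (hβ4 : ∀ N i, ∫ ω, (β N i ω - θ) ^ 4 ∂μ ≤ K * (v N) ^ 2)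
    (hemean : ∀ i t, ∫ ω, e i t ω ∂μ = 0)
    (hevar : ∀ i t, variance (e i t) μ = σ2)
    (he4 : ∀ i t, Integrable (fun ω => (e i t ω) ^ 4) μ)
    (hindep : ∀ N, iIndepFun (m := fun _ : ℕ ⊕ ℕ × ℕ => (inferInstance : MeasurableSpace ℝ))
      (Sum.elim (β N) (fun p : ℕ × ℕ => e p.1 p.2)) μ)
    (T : ℕ → ℕ) (hT1 : ∀ N, 1 ≤ T N)
    (βhat : ℕ → ℕ → Ω → ℝ)
    (hβhat : ∀ N i ω, βhat N i ω
      = β N i ω + (1 / (T N) : ℝ) * ∑ t ∈ Finset.range (T N), e i t ω)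
    (θhat : ℕ → Ω → ℝ)
    (hθhat : ∀ N ω, θhat N ω = (1 / N : ℝ) * ∑ i ∈ Finset.range N, βhat N i ω)
    (Vhat : ℕ → Ω → ℝ)
    (hVhat : ∀ N ω, Vhat N ω
      = (1 / (N : ℝ) ^ 2) * ∑ i ∈ Finset.range N, (βhat N i ω - θhat N ω) ^ 2)
    (VarN : ℕ → ℝ)
    (hVarN : ∀ N, VarN N = v N / N + σ2 / ((N : ℝ) * (T N : ℝ))) :
    ∀ ε > (0 : ℝ),
      Tendsto (fun N : ℕ => μ {ω | ε < |Vhat N ω / VarN N - 1|}) atTop (nhds 0) :=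
  toy_model_adaptive_variance_ratio_consistency_general μ θ σ2 K hσ2 hK v β e hβmeas hemeas heid
    hβint4 hβmean hβvar hβ4 hemean hevar he4 hindep T hT1 βhat hβhat θhat hθhat Vhat hVhat VarN
    hVarN
end
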